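/- arXiv:1809.04807 — 4 statements merged into one kernel-verified Lean document; each statement's English description precedes it below -/
import Mathlib

section
/- Let r be a real root of x^3 - 5x^2 + 10x - 10 = 0 and define δ1 = (r^2 - 6r + 10)/4, δ2 = (-r^2 + 5r - 5)/3, δ3 = (r^2 - 2r + 2)/12. Then for all real (or complex) z, δ1(1 + z/r) + δ2(1 + z/r)^2 + δ3(1 + z/r)^5 = 1 + z + z^2/2 + z^3/6 + z^4/(12r) + z^5/(60r^2). -/
/-!
Expand the left-hand side in powers of `w = z / r`. The coefficients of `1`, `w` and `w ^ 2`
give `1 + z + z ^ 2 / 2` for every `r ≠ 0`; the remaining terms are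
`δ₃ * (10 * w ^ 3 + 5 * w ^ 4 + w ^ 5)` with `δ₃ = (r ^ 2 - 2 * r + 2) / 12`, and the cubic
equation for `r` says exactly that `δ₃ = r ^ 3 / 60`.
-/

section

variable {K : Type*} [Field K] [CharZero K] {r : K}

lemma ne_zero_of_cubic_eq_zero (hr : r ^ 3 - 5 * r ^ 2 + 10 * r - 10 = 0) : r ≠ 0 := by
  rintro rfl
  norm_num at hr

lemma div_twelve_eq_cube_div_sixty_of_cubic_eq_zero
    (hr : r ^ 3 - 5 * r ^ 2 + 10 * r - 10 = 0) :
    (r ^ 2 - 2 * r + 2) / 12 = r ^ 3 / 60 := by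
  linear_combination -hr / 60

lemma ssp53_stability_expand (hr : r ≠ 0) (z : K) :
    (r ^ 2 - 6 * r + 10) / 4 * (1 + z / r)
      + (-r ^ 2 + 5 * r - 5) / 3 * (1 + z / r) ^ 2
      + (r ^ 2 - 2 * r + 2) / 12 * (1 + z / r) ^ 5
    = 1 + z + z ^ 2 / 2
      + (r ^ 2 - 2 * r + 2) / 12 * (10 * (z / r) ^ 3 + 5 * (z / r) ^ 4 + (z / r) ^ 5) := by
  field_simp
  ring

theorem ssp53_stability_eq_taylor (hr : r ^ 3 - 5 * r ^ 2 + 10 * r - 10 = 0) (z : K) :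
    (r ^ 2 - 6 * r + 10) / 4 * (1 + z / r)
      + (-r ^ 2 + 5 * r - 5) / 3 * (1 + z / r) ^ 2
      + (r ^ 2 - 2 * r + 2) / 12 * (1 + z / r) ^ 5
    = 1 + z + z ^ 2 / 2 + z ^ 3 / 6 + z ^ 4 / (12 * r) + z ^ 5 / (60 * r ^ 2) := by
  have hr0 := ne_zero_of_cubic_eq_zero hr
  rw [ssp53_stability_expand hr0, div_twelve_eq_cube_div_sixty_of_cubic_eq_zero hr]
  field_simp
  ring

end

theorem stmt_1 (r : ℝ) (hr : r ^ 3 - 5 * r ^ 2 + 10 * r - 10 = 0) (z : ℂ) :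
    ((r ^ 2 - 6 * r + 10) / 4 : ℂ) * (1 + z / r)
      + ((-r ^ 2 + 5 * r - 5) / 3 : ℂ) * (1 + z / r) ^ 2
      + ((r ^ 2 - 2 * r + 2) / 12 : ℂ) * (1 + z / r) ^ 5
    = 1 + z + z ^ 2 / 2 + z ^ 3 / 6 + z ^ 4 / (12 * r) + z ^ 5 / (60 * r ^ 2) :=
  ssp53_stability_eq_taylor (by exact_mod_cast hr) z
end

section
/- Let r be the real root of x^3 - 5x^2 + 10x - 10 = 0. Then the quartic 3r^4 - 40r^3 + 175r^2 - 330r + 250 is nonzero. -/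
theorem stmt_4 (r : ℝ) (hr : r ^ 3 - 5 * r ^ 2 + 10 * r - 10 = 0) :
    3 * r ^ 4 - 40 * r ^ 3 + 175 * r ^ 2 - 330 * r + 250 ≠ 0 := by
  intro h
  -- The quartic is `(3r - 25)` times the cubic plus the remainder `10r(2r - 5)`.
  have hrem : 10 * r * (2 * r - 5) = 0 := by linear_combination h - (3 * r - 25) * hr
  rcases mul_eq_zero.mp hrem with hzero | hhalf
  · obtain rfl : r = 0 := by simpa using hzero
    norm_num at hr
  · obtain rfl : r = 5 / 2 := by linarith
    norm_num at hr
end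

section
/- Let s ≥ 1 and let 𝔸 be the (s+1)×(s+1) strictly lower triangular matrix with all entries below the diagonal equal to 1/s. Then for r = s, the matrix I + r𝔸 is invertible, (I + r𝔸)^{-1}e ≥ 0, and r(I + r𝔸)^{-1}𝔸 ≥ 0 componentwise. In particular R(𝔸) ≥ s. -/
/-!
With `r = s` the matrix `1 + s • A` is the lower triangular matrix of ones `L`, whose inverse is
`1 - N` for the subdiagonal shift `N`. Hence `(1 + s • A)⁻¹ *ᵥ e = (1 - N) *ᵥ L *ᵥ e₀ = e₀`, and
`s • ((1 + s • A)⁻¹ * A) = 1 - (1 + s • A)⁻¹ = N`; both are nonnegative.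
-/

open Matrix

namespace Matrix

variable {R : Type*} {n : ℕ}

def lowerOnes (R : Type*) [Zero R] [One R] (n : ℕ) : Matrix (Fin n) (Fin n) R :=
  fun i j => if j ≤ i then 1 else 0

def subdiag (R : Type*) [Zero R] [One R] (n : ℕ) : Matrix (Fin n) (Fin n) R :=
  fun i j => if (i : ℕ) = j + 1 then 1 else 0

theorem subdiag_mul_lowerOnes [Ring R] : subdiag R n * lowerOnes R n = lowerOnes R n - 1 := by
  ext ⟨i, hi⟩ ⟨k, hk⟩
  simp only [mul_apply, subdiag, lowerOnes, sub_apply, one_apply, Fin.mk.injEq, Fin.mk_le_mk]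
  rcases i with _ | m
  · simp only [Nat.right_eq_add, Nat.add_eq_zero_iff, one_ne_zero, and_false, if_false, zero_mul,
      Finset.sum_const_zero, Nat.le_zero]
    split_ifs <;> first | omega | simp
  · rw [Finset.sum_eq_single ⟨m, by omega⟩]
    · simp only [if_true, one_mul, Fin.mk_le_mk]
      split_ifs <;> first | omega | simp
    · intro j _ hj
      rw [if_neg (fun h => hj (Fin.ext (by simp; omega))), zero_mul]
    · simp

theorem one_sub_subdiag_mul_lowerOnes [Ring R] : (1 - subdiag R n) * lowerOnes R n = 1 := by
  rw [sub_mul, subdiag_mul_lowerOnes, one_mul, sub_sub_cancel]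

theorem lowerOnes_mulVec_single_zero [Semiring R] :
    lowerOnes R (n + 1) *ᵥ Pi.single 0 1 = fun _ => 1 := by
  ext i
  simp [lowerOnes]

theorem subdiag_nonneg [Zero R] [One R] [Preorder R] [ZeroLEOneClass R] (i j : Fin n) :
    0 ≤ subdiag R n i j := by
  unfold subdiag
  split_ifs <;> simp

theorem one_add_smul_eq_lowerOnes [DivisionRing R] {c : R} (hc : c ≠ 0)
    {A : Matrix (Fin n) (Fin n) R} (hA : ∀ i j, A i j = if (j : ℕ) < i then 1 / c else 0) :
    1 + c • A = lowerOnes R n := by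
  ext i j
  simp only [add_apply, one_apply, smul_apply, hA, lowerOnes, smul_eq_mul, Fin.val_fin_lt]
  rcases lt_trichotomy j i with h | rfl | h
  · simp [h, h.le, h.ne', hc]
  · simp
  · simp [h.ne, not_lt_of_gt h, not_le_of_gt h]

theorem inv_one_add_mul_eq_one_sub_inv [CommRing R] {m : Type*} [Fintype m] [DecidableEq m]
    {X : Matrix m m R} (hX : IsUnit (1 + X)) : (1 + X)⁻¹ * X = 1 - (1 + X)⁻¹ := by
  rw [eq_sub_iff_add_eq, ← mul_add_one, add_comm X 1,
    nonsing_inv_mul _ ((isUnit_iff_isUnit_det _).mp hX)]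

end Matrix

theorem stmt_8 (s : ℕ) (hs : 1 ≤ s)
    (A : Matrix (Fin (s + 1)) (Fin (s + 1)) ℝ)
    (hA : ∀ i j, A i j = if (j : ℕ) < (i : ℕ) then (1 : ℝ) / s else 0) :
    IsUnit (1 + (s : ℝ) • A) ∧
    (∀ i, 0 ≤ ((1 + (s : ℝ) • A)⁻¹ *ᵥ (fun _ => (1 : ℝ))) i) ∧
    (∀ i j, 0 ≤ ((s : ℝ) • ((1 + (s : ℝ) • A)⁻¹ * A)) i j) := by
  have hM : 1 + (s : ℝ) • A = lowerOnes ℝ (s + 1) :=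
    one_add_smul_eq_lowerOnes (Nat.cast_ne_zero.mpr (by omega)) hA
  have hDet : IsUnit (1 + (s : ℝ) • A).det := by
    rw [hM]
    exact isUnit_det_of_left_inverse one_sub_subdiag_mul_lowerOnes
  have hInv : (1 + (s : ℝ) • A)⁻¹ = 1 - subdiag ℝ (s + 1) := by
    rw [hM]
    exact inv_eq_left_inv one_sub_subdiag_mul_lowerOnes
  have hUnit : IsUnit (1 + (s : ℝ) • A) := (isUnit_iff_isUnit_det _).mpr hDet
  refine ⟨hUnit, fun i => ?_, fun i j => ?_⟩
  · rw [← lowerOnes_mulVec_single_zero (R := ℝ), ← hM, mulVec_mulVec, nonsing_inv_mul _ hDet,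
      one_mulVec]
    exact (Pi.single_nonneg.mpr zero_le_one : (0 : Fin (s + 1) → ℝ) ≤ Pi.single 0 1) i
  · rw [← mul_smul_comm, inv_one_add_mul_eq_one_sub_inv hUnit, hInv, sub_sub_cancel]
    exact subdiag_nonneg i j
end

section
/- Let s ≥ 2 and let 𝔸 be the (s+1)×(s+1) matrix with 𝔸_{ij} = 1/(s-1) for 1 ≤ j < i ≤ s, 𝔸_{s+1,j} = 1/s for 1 ≤ j ≤ s, and all other entries zero. Then for r = s - 1, the matrix I + r𝔸 is invertible, (I + r𝔸)^{-1}e ≥ 0 and r(I + r𝔸)^{-1}𝔸 ≥ 0 componentwise. -/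
/-!
Write `r = s - 1` and `M = I + r𝔸`, with indices from `0` to `s`. Then `M N = r𝔸` for the subdiagonal matrix `N` with
`N_{i+1,i} = 1` for `i + 1 < s` and `N_{s,s-1} = (s - 1)/s`, so `M (I - N) = I`, i.e. `M⁻¹ = I - N`.
Hence `r M⁻¹ 𝔸 = N ≥ 0`, and `M⁻¹ e = e - N e ≥ 0` because every row sum of `N` is at most one.
-/

open Matrix

theorem Fin.sum_ite_val_eq {M : Type*} [AddCommMonoid M] {n : ℕ} (m : ℕ) (f : Fin n → M) :
    ∑ j : Fin n, (if (j : ℕ) = m then f j else 0) = if h : m < n then f ⟨m, h⟩ else 0 := by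
  split_ifs with h
  · rw [Finset.sum_eq_single ⟨m, h⟩ (fun j _ hj => if_neg fun hjm => hj (Fin.ext hjm)) (by simp)]
    simp
  · exact Finset.sum_eq_zero fun j _ => if_neg (by omega)

noncomputable def ssp2Butcher (s : ℕ) : Matrix (Fin (s + 1)) (Fin (s + 1)) ℝ := fun i j =>
  if (i : ℕ) = s then (if (j : ℕ) < s then (1 : ℝ) / s else 0)
  else (if (j : ℕ) < (i : ℕ) then (1 : ℝ) / (s - 1) else 0)

noncomputable def ssp2Subdiag (s : ℕ) : Matrix (Fin (s + 1)) (Fin (s + 1)) ℝ := fun i j =>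
  if (i : ℕ) = j + 1 then (if (i : ℕ) = s then ((s : ℝ) - 1) / s else 1) else 0

theorem ssp2Subdiag_nonneg (s : ℕ) (i j : Fin (s + 1)) : 0 ≤ ssp2Subdiag s i j := by
  unfold ssp2Subdiag
  split_ifs with hij his
  · have : (1 : ℝ) ≤ s := by exact_mod_cast (by omega : 1 ≤ s)
    exact div_nonneg (by linarith) (by linarith)
  all_goals norm_num

theorem sum_ssp2Subdiag_le_one (s : ℕ) (i : Fin (s + 1)) : ∑ j, ssp2Subdiag s i j ≤ 1 := by
  cases i using Fin.cases with
  | zero => simp [ssp2Subdiag]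
  | succ i =>
    simp only [ssp2Subdiag, Fin.val_succ, add_left_inj]
    simp_rw [eq_comm (a := (i : ℕ))]
    rw [Fin.sum_ite_val_eq]
    split_ifs
    · exact div_le_one_of_le₀ (by linarith) s.cast_nonneg
    all_goals norm_num

theorem one_add_smul_ssp2Butcher_mul_ssp2Subdiag {s : ℕ} (hs : 2 ≤ s) :
    (1 + ((s : ℝ) - 1) • ssp2Butcher s) * ssp2Subdiag s = ((s : ℝ) - 1) • ssp2Butcher s := by
  have hr : (s : ℝ) - 1 ≠ 0 := by
    have : (2 : ℝ) ≤ s := by exact_mod_cast hs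
    linarith
  ext i k
  simp only [mul_apply, ssp2Subdiag, mul_ite, mul_zero]
  rw [Fin.sum_ite_val_eq]
  simp only [Matrix.add_apply, one_apply, Matrix.smul_apply, ssp2Butcher, smul_eq_mul, Fin.ext_iff]
  split_ifs <;> first | omega | simp [hr, div_eq_mul_inv]

theorem one_add_smul_ssp2Butcher_mul_one_sub_ssp2Subdiag {s : ℕ} (hs : 2 ≤ s) :
    (1 + ((s : ℝ) - 1) • ssp2Butcher s) * (1 - ssp2Subdiag s) = 1 := by
  rw [Matrix.mul_sub, Matrix.mul_one, one_add_smul_ssp2Butcher_mul_ssp2Subdiag hs, add_sub_cancel_right]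

theorem inv_one_add_smul_ssp2Butcher {s : ℕ} (hs : 2 ≤ s) :
    (1 + ((s : ℝ) - 1) • ssp2Butcher s)⁻¹ = 1 - ssp2Subdiag s :=
  inv_eq_right_inv (one_add_smul_ssp2Butcher_mul_one_sub_ssp2Subdiag hs)

theorem smul_inv_one_add_smul_ssp2Butcher_mul {s : ℕ} (hs : 2 ≤ s) :
    ((s : ℝ) - 1) • ((1 + ((s : ℝ) - 1) • ssp2Butcher s)⁻¹ * ssp2Butcher s) = ssp2Subdiag s := by
  have hleft : (1 - ssp2Subdiag s) * (1 + ((s : ℝ) - 1) • ssp2Butcher s) = 1 :=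
    mul_eq_one_comm.mp (one_add_smul_ssp2Butcher_mul_one_sub_ssp2Subdiag hs)
  rw [inv_one_add_smul_ssp2Butcher hs, ← Matrix.mul_smul,
    ← one_add_smul_ssp2Butcher_mul_ssp2Subdiag hs, ← Matrix.mul_assoc, hleft, Matrix.one_mul]

theorem stmt_9 (s : ℕ) (hs : 2 ≤ s)
    (A : Matrix (Fin (s + 1)) (Fin (s + 1)) ℝ)
    (hA : ∀ i j, A i j =
      if (i : ℕ) = s then (if (j : ℕ) < s then (1 : ℝ) / s else 0)
      else (if (j : ℕ) < (i : ℕ) then (1 : ℝ) / (s - 1) else 0)) :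
    IsUnit (1 + ((s : ℝ) - 1) • A) ∧
    (∀ i, 0 ≤ ((1 + ((s : ℝ) - 1) • A)⁻¹ *ᵥ (fun _ => (1 : ℝ))) i) ∧
    (∀ i j, 0 ≤ (((s : ℝ) - 1) • ((1 + ((s : ℝ) - 1) • A)⁻¹ * A)) i j) := by
  obtain rfl : A = ssp2Butcher s := Matrix.ext hA
  refine ⟨IsUnit.of_mul_eq_one _ (one_add_smul_ssp2Butcher_mul_one_sub_ssp2Subdiag hs),
    fun i => ?_, fun i j => ?_⟩
  · rw [inv_one_add_smul_ssp2Butcher hs, sub_mulVec, one_mulVec, Pi.sub_apply, sub_nonneg]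
    simpa [mulVec, dotProduct] using sum_ssp2Subdiag_le_one s i
  · rw [smul_inv_one_add_smul_ssp2Butcher_mul hs]
    exact ssp2Subdiag_nonneg s i j
end
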